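/- For every g ∈ H with g ≠ 1, the set of A ∈ ℂ with A ≠ 0 such that ρ_A(g) = 1 in PGL(2,ℂ) is countable. -/

import Mathlib

/-- Relations for the presented group `H = ⟨s, t | s³ = 1, t² = 1⟩`,
with `s` corresponding to `0` and `t` to `1`. -/
def hRels : Set (FreeGroup (Fin 2)) :=
  { FreeGroup.of 0 ^ 3, FreeGroup.of 1 ^ 2 }

/-- The presented group `H = ⟨s, t | s³ = 1, t² = 1⟩`. -/
abbrev Hgrp := PresentedGroup hRels

/-- The generator `s` of `H`. -/
def hs : Hgrp := PresentedGroup.of 0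

/-- The generator `t` of `H`. -/
def ht : Hgrp := PresentedGroup.of 1

/-- `PGL(2,ℂ)`: the quotient of `GL(2,ℂ)` by its center (nonzero scalar matrices). -/
abbrev PGL2 := GL (Fin 2) ℂ ⧸ Subgroup.center (GL (Fin 2) ℂ)

/-- The matrix `!![0, 1; −1, 0]` as an element of `GL(2,ℂ)`. -/
noncomputable def Mt0 : GL (Fin 2) ℂ :=
  Matrix.GeneralLinearGroup.mkOfDetNeZero !![0, 1; -1, 0]
    (by norm_num [Matrix.det_fin_two_of])

/-- The matrix `!![0, A⁻¹; −A, 1]` as an element of `GL(2,ℂ)`, for `A ≠ 0`. -/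
noncomputable def MsA (A : ℂ) (hA : A ≠ 0) : GL (Fin 2) ℂ :=
  Matrix.GeneralLinearGroup.mkOfDetNeZero !![0, A⁻¹; -A, 1]
    (by rw [Matrix.det_fin_two_of]; field_simp; norm_num)

/-!
The matrices of `ρ_A` depend on `A` only through `A` and `A⁻¹`, so for a word `w` in `s` and `t`
the matrix of `ρ_A(w)` is the specialization at `T = A` of one matrix `W` over the Laurent
polynomial ring `ℂ[T, T⁻¹]`. Now `ρ_A(w) = 1` says that this specialization is scalar, i.e. that
the Laurent polynomials `W₀₁`, `W₁₀` and `W₀₀ - W₁₁` vanish at `A`. They cannot all be zero: then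
`ρ_2(w)` would be trivial, whereas `ρ_2` is faithful by the ping-pong lemma on `ℙ¹(ℂ)`
(`s` and `s²` map the complement of the unit disc into the disc, `t` maps the disc into its
complement). A nonzero Laurent polynomial has finitely many roots.
-/

open MatrixGroups LaurentPolynomial
open scoped LinearAlgebra.Projectivization Pointwise

theorem Matrix.mem_range_scalar_fin_two_iff {R : Type*} [CommRing R]
    (M : Matrix (Fin 2) (Fin 2) R) :
    M ∈ Set.range (Matrix.scalar (Fin 2)) ↔ M 0 1 = 0 ∧ M 1 0 = 0 ∧ M 0 0 = M 1 1 := by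
  constructor
  · rintro ⟨a, rfl⟩
    simp
  · rintro ⟨h01, h10, hdiag⟩
    refine ⟨M 0 0, ?_⟩
    ext i j
    fin_cases i <;> fin_cases j <;> simp [h01, h10, hdiag]

theorem LaurentPolynomial.finite_setOf_eval₂_eq_zero {K : Type*} [Field K] {f : K[T;T⁻¹]}
    (hf : f ≠ 0) : {u : Kˣ | eval₂ (RingHom.id K) u f = 0}.Finite := by
  obtain ⟨n, p, hp⟩ := exists_T_pow f
  have hp0 : p ≠ 0 := by
    rintro rfl
    simp [hf, (isUnit_T (n : ℤ)).ne_zero] at hp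
  refine ((Polynomial.finite_setOfPred_isRoot hp0).preimage Units.val_injective.injOn).subset
    fun u (hu : eval₂ _ u f = 0) => ?_
  calc p.eval (u : K) = eval₂ (RingHom.id K) u (Polynomial.toLaurent p) := by
        rw [eval₂_toLaurent, Polynomial.eval₂_id]
    _ = 0 := by rw [hp, map_mul, hu, zero_mul]

theorem finite_setOf_map_eval₂_mem_range_scalar {K : Type*} [Field K]
    {W : Matrix (Fin 2) (Fin 2) K[T;T⁻¹]} (hW : W ∉ Set.range (Matrix.scalar (Fin 2))) :
    {u : Kˣ | W.map (eval₂ (RingHom.id K) u) ∈ Set.range (Matrix.scalar (Fin 2))}.Finite := by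
  simp only [Matrix.mem_range_scalar_fin_two_iff, Matrix.map_apply] at hW ⊢
  obtain h | h | h : W 0 1 ≠ 0 ∨ W 1 0 ≠ 0 ∨ W 0 0 - W 1 1 ≠ 0 := by
    rw [sub_ne_zero]
    tauto
  · exact (finite_setOf_eval₂_eq_zero h).subset fun u hu => hu.1
  · exact (finite_setOf_eval₂_eq_zero h).subset fun u hu => hu.2.1
  · exact (finite_setOf_eval₂_eq_zero h).subset fun u hu => by simp [hu.2.2]

section WordRep

variable {R S : Type*} [CommRing R] [CommRing S]

def sMat (a : Rˣ) : SL(2, R) :=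
  ⟨!![0, ↑a⁻¹; -↑a, 1], by simp [Matrix.det_fin_two_of]⟩

def tMat : SL(2, R) :=
  ⟨!![0, 1; -1, 0], by simp [Matrix.det_fin_two_of]⟩

theorem coe_sMat (a : Rˣ) : (sMat a : Matrix (Fin 2) (Fin 2) R) = !![0, ↑a⁻¹; -↑a, 1] := rfl

theorem coe_tMat : ((tMat : SL(2, R)) : Matrix (Fin 2) (Fin 2) R) = !![0, 1; -1, 0] := rfl

theorem coe_sMat_pow_three (a : Rˣ) :
    ((sMat a ^ 3 : SL(2, R)) : Matrix (Fin 2) (Fin 2) R) = Matrix.scalar (Fin 2) (-1) := by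
  rw [Matrix.SpecialLinearGroup.coe_pow, coe_sMat]
  ext i j
  fin_cases i <;> fin_cases j <;> simp [pow_succ]

theorem coe_tMat_sq :
    (((tMat : SL(2, R)) ^ 2 : SL(2, R)) : Matrix (Fin 2) (Fin 2) R) =
      Matrix.scalar (Fin 2) (-1) := by
  rw [Matrix.SpecialLinearGroup.coe_pow, coe_tMat]
  ext i j
  fin_cases i <;> fin_cases j <;> simp [pow_succ]

theorem map_sMat (f : R →+* S) (a : Rˣ) :
    Matrix.SpecialLinearGroup.map f (sMat a) = sMat (Units.map f a) := by
  apply Subtype.ext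
  rw [Matrix.SpecialLinearGroup.map_apply_coe, coe_sMat, coe_sMat]
  ext i j
  fin_cases i <;> fin_cases j <;> simp

theorem map_tMat (f : R →+* S) : Matrix.SpecialLinearGroup.map f (tMat : SL(2, R)) = tMat := by
  apply Subtype.ext
  rw [Matrix.SpecialLinearGroup.map_apply_coe, coe_tMat, coe_tMat]
  ext i j
  fin_cases i <;> fin_cases j <;> simp

def wordRep (a : Rˣ) : FreeGroup (Fin 2) →* SL(2, R) :=
  FreeGroup.lift ![sMat a, tMat]

theorem wordRep_of_zero (a : Rˣ) : wordRep a (.of 0) = sMat a := by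
  simp [wordRep]

theorem wordRep_of_one (a : Rˣ) : wordRep a (.of 1) = tMat := by
  simp [wordRep]

theorem map_wordRep (f : R →+* S) (a : Rˣ) (w : FreeGroup (Fin 2)) :
    Matrix.SpecialLinearGroup.map f (wordRep a w) = wordRep (Units.map f a) w := by
  rw [← MonoidHom.comp_apply]
  congr 1
  refine FreeGroup.ext_hom _ _ fun i => ?_
  fin_cases i <;> simp [wordRep, map_sMat, map_tMat]

end WordRep

theorem mk_toGL_eq_one_iff {n R : Type*} [Fintype n] [DecidableEq n] [CommRing R]
    (M : Matrix.SpecialLinearGroup n R) :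
    (QuotientGroup.mk (M : GL n R) : GL n R ⧸ Subgroup.center (GL n R)) = 1 ↔
      (M : Matrix n n R) ∈ Set.range (Matrix.scalar n) := by
  rw [QuotientGroup.eq_one_iff, Matrix.GeneralLinearGroup.mem_center_iff_val_mem_range_scalar]
  rfl

theorem toGL_sMat (u : ℂˣ) : (sMat u : GL (Fin 2) ℂ) = MsA u u.ne_zero := by
  ext i j
  fin_cases i <;> fin_cases j <;> simp [coe_sMat, MsA]

theorem toGL_tMat : ((tMat : SL(2, ℂ)) : GL (Fin 2) ℂ) = Mt0 := by
  ext i j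
  fin_cases i <;> fin_cases j <;> simp [coe_tMat, Mt0]

def projWordRep (u : ℂˣ) : FreeGroup (Fin 2) →* PGL2 :=
  (QuotientGroup.mk' _).comp (Matrix.SpecialLinearGroup.toGL.comp (wordRep u))

theorem projWordRep_eq_one_iff (u : ℂˣ) (w : FreeGroup (Fin 2)) :
    projWordRep u w = 1 ↔
      (wordRep u w : Matrix (Fin 2) (Fin 2) ℂ) ∈ Set.range (Matrix.scalar (Fin 2)) :=
  mk_toGL_eq_one_iff _

noncomputable def rho (u : ℂˣ) : Hgrp →* PGL2 :=
  PresentedGroup.toGroup (f := fun i => projWordRep u (.of i)) <| by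
    have hlift : FreeGroup.lift (fun i => projWordRep u (.of i)) = projWordRep u :=
      FreeGroup.ext_hom _ _ fun i => by simp
    rintro r (rfl | rfl) <;> rw [hlift, projWordRep_eq_one_iff, map_pow]
    · rw [wordRep_of_zero, coe_sMat_pow_three]
      exact Set.mem_range_self _
    · rw [wordRep_of_one, coe_tMat_sq]
      exact Set.mem_range_self _

theorem rho_mk (u : ℂˣ) (w : FreeGroup (Fin 2)) :
    rho u (PresentedGroup.mk _ w) = projWordRep u w := by
  show ((rho u).comp (PresentedGroup.mk _)) w = _
  congr 1
  exact FreeGroup.ext_hom _ _ fun i => (PresentedGroup.toGroup.of _ : rho u (.of i) = _)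

theorem rho_unique {ρ : Hgrp →* PGL2} (u : ℂˣ)
    (hρs : ρ hs = QuotientGroup.mk (MsA u u.ne_zero)) (hρt : ρ ht = QuotientGroup.mk Mt0) :
    ρ = rho u := by
  refine PresentedGroup.ext fun i => ?_
  rw [PresentedGroup.of, rho_mk]
  fin_cases i
  · exact hρs.trans (by simp [projWordRep, wordRep_of_zero, toGL_sMat])
  · exact hρt.trans (by simp [projWordRep, wordRep_of_one, toGL_tMat])

noncomputable def genericWordMatrix (R : Type*) [CommRing R] (w : FreeGroup (Fin 2)) :
    Matrix (Fin 2) (Fin 2) R[T;T⁻¹] :=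
  (wordRep (isUnit_T 1).unit w : SL(2, R[T;T⁻¹]))

theorem wordRep_eq_map_eval₂ {R : Type*} [CommRing R] (u : Rˣ) (w : FreeGroup (Fin 2)) :
    (wordRep u w : Matrix (Fin 2) (Fin 2) R) =
      (genericWordMatrix R w).map (eval₂ (RingHom.id R) u) := by
  have hT : Units.map (eval₂ (RingHom.id R) u : R[T;T⁻¹] →* R) (isUnit_T 1).unit = u := by
    ext
    simp [eval₂_T]
  conv_lhs => rw [← hT, ← map_wordRep]
  rfl

theorem rho_mk_eq_one_iff (u : ℂˣ) (w : FreeGroup (Fin 2)) :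
    rho u (PresentedGroup.mk _ w) = 1 ↔
      (genericWordMatrix ℂ w).map (eval₂ (RingHom.id ℂ) u) ∈ Set.range (Matrix.scalar (Fin 2)) := by
  rw [rho_mk, projWordRep_eq_one_iff, wordRep_eq_map_eval₂]

noncomputable instance : MulAction PGL2 (ℙ ℂ (Fin 2 → ℂ)) :=
  inferInstanceAs (MulAction PGL(2, ℂ) _)

theorem mk_smul_mk (g : GL (Fin 2) ℂ) {v : Fin 2 → ℂ} (hv : v ≠ 0) :
    (QuotientGroup.mk g : PGL2) • Projectivization.mk ℂ v hv =
      Projectivization.mk ℂ (g • v) ((smul_ne_zero_iff_ne g).2 hv) :=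
  rfl

/-- In the affine coordinate `z = x 0 / x 1` this is the open disc `‖z‖ < 1`. -/
def unitDisc : Set (ℙ ℂ (Fin 2 → ℂ)) := {x | ‖x.rep 0‖ < ‖x.rep 1‖}

theorem mk_mem_unitDisc_iff {v : Fin 2 → ℂ} (hv : v ≠ 0) :
    Projectivization.mk ℂ v hv ∈ unitDisc ↔ ‖v 0‖ < ‖v 1‖ := by
  obtain ⟨a, ha⟩ := Projectivization.exists_smul_eq_mk_rep ℂ v hv
  simp only [unitDisc, Set.mem_ofPred_eq, ← ha, Pi.smul_apply, Units.smul_def, smul_eq_mul,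
    norm_mul]
  exact mul_lt_mul_iff_right₀ (norm_pos_iff.2 a.ne_zero)

theorem mk_smul_mk_mem_unitDisc_iff (g : SL(2, ℂ)) {v : Fin 2 → ℂ} (hv : v ≠ 0) :
    (QuotientGroup.mk (g : GL (Fin 2) ℂ) : PGL2) • Projectivization.mk ℂ v hv ∈ unitDisc ↔
      ‖g 0 0 * v 0 + g 0 1 * v 1‖ < ‖g 1 0 * v 0 + g 1 1 * v 1‖ := by
  rw [mk_smul_mk, mk_mem_unitDisc_iff]
  simp

theorem norm_apply_zero_pos {v : Fin 2 → ℂ} (hv : v ≠ 0) (h : ‖v 1‖ ≤ ‖v 0‖) : 0 < ‖v 0‖ := by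
  refine norm_pos_iff.2 fun h0 => hv ?_
  ext i
  fin_cases i <;> simp_all

theorem sMat_smul_mem_unitDisc {u : ℂˣ} (hu : 2 ≤ ‖(u : ℂ)‖) {x : ℙ ℂ (Fin 2 → ℂ)}
    (hx : x ∉ unitDisc) : (QuotientGroup.mk (sMat u : GL (Fin 2) ℂ) : PGL2) • x ∈ unitDisc := by
  induction x using Projectivization.ind with | h v hv =>
  rw [mk_mem_unitDisc_iff, not_lt] at hx
  rw [mk_smul_mk_mem_unitDisc_iff]
  suffices ‖(u : ℂ)‖⁻¹ * ‖v 1‖ < ‖-(u * v 0) + v 1‖ by simpa [coe_sMat] using this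
  have hv0 := norm_apply_zero_pos hv hx
  have hinv : ‖(u : ℂ)‖⁻¹ ≤ 2⁻¹ := inv_anti₀ two_pos hu
  have htri : ‖(u : ℂ)‖ * ‖v 0‖ ≤ ‖-(u * v 0) + v 1‖ + ‖v 1‖ :=
    calc ‖(u : ℂ)‖ * ‖v 0‖ = ‖(-(u * v 0) + v 1) - v 1‖ := by simp
      _ ≤ _ := norm_sub_le _ _
  nlinarith [norm_nonneg (v 1)]

theorem sMat_sq_smul_mem_unitDisc {u : ℂˣ} (hu : 2 ≤ ‖(u : ℂ)‖) {x : ℙ ℂ (Fin 2 → ℂ)}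
    (hx : x ∉ unitDisc) :
    (QuotientGroup.mk ((sMat u ^ 2 : SL(2, ℂ)) : GL (Fin 2) ℂ) : PGL2) • x ∈ unitDisc := by
  induction x using Projectivization.ind with | h v hv =>
  rw [mk_mem_unitDisc_iff, not_lt] at hx
  rw [mk_smul_mk_mem_unitDisc_iff]
  suffices ‖-v 0 + (u : ℂ)⁻¹ * v 1‖ < ‖(u : ℂ)‖ * ‖v 0‖ by
    simpa [coe_sMat, pow_two] using this
  have hv0 := norm_apply_zero_pos hv hx
  have hinv : ‖(u : ℂ)‖⁻¹ ≤ 2⁻¹ := inv_anti₀ two_pos hu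
  have htri : ‖-v 0 + (u : ℂ)⁻¹ * v 1‖ ≤ ‖v 0‖ + ‖(u : ℂ)‖⁻¹ * ‖v 1‖ :=
    (norm_add_le _ _).trans (by simp)
  nlinarith [norm_nonneg (v 1)]

theorem tMat_smul_notMem_unitDisc {x : ℙ ℂ (Fin 2 → ℂ)} (hx : x ∈ unitDisc) :
    (QuotientGroup.mk ((tMat : SL(2, ℂ)) : GL (Fin 2) ℂ) : PGL2) • x ∉ unitDisc := by
  induction x using Projectivization.ind with | h v hv =>
  rw [mk_mem_unitDisc_iff] at hx
  rw [mk_smul_mk_mem_unitDisc_iff]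
  simpa [coe_tMat] using hx.le

def zmodPowHom {G : Type*} [Group G] {n : ℕ} (g : G) (hg : g ^ n = 1) :
    Multiplicative (ZMod n) →* G :=
  AddMonoidHom.toMultiplicativeLeft
    (ZMod.lift n ⟨zmultiplesHom (Additive G) (.ofMul g), by simp [← ofMul_pow, hg]⟩)

theorem zmodPowHom_ofAdd_one {G : Type*} [Group G] {n : ℕ} (g : G) (hg : g ^ n = 1) :
    zmodPowHom g hg (.ofAdd 1) = g := by
  rw [← Int.cast_one (R := ZMod n)]
  change Additive.toMul (ZMod.lift n (A := Additive G) _ ((1 : ℤ) : ZMod n)) = _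
  rw [ZMod.lift_coe]
  simp

abbrev cyclicFactor (i : Fin 2) : Type := Multiplicative (ZMod (![3, 2] i))

instance (i : Fin 2) : NeZero (![3, 2] i) := by
  fin_cases i <;> exact ⟨by simp⟩

theorem of_pow_eq_one (i : Fin 2) : (PresentedGroup.of i : Hgrp) ^ (![3, 2] i) = 1 := by
  rw [PresentedGroup.of, ← map_pow]
  apply PresentedGroup.one_of_mem
  fin_cases i <;> simp [hRels]

noncomputable def coprodToH : Monoid.CoprodI cyclicFactor →* Hgrp :=
  Monoid.CoprodI.lift fun i => zmodPowHom _ (of_pow_eq_one i)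

theorem coprodToH_of_ofAdd_one (i : Fin 2) :
    coprodToH (Monoid.CoprodI.of (.ofAdd 1 : cyclicFactor i)) = PresentedGroup.of i := by
  rw [coprodToH, Monoid.CoprodI.lift_of, zmodPowHom_ofAdd_one]

theorem coprodToH_surjective : Function.Surjective coprodToH := by
  rw [← MonoidHom.range_eq_top, eq_top_iff, ← PresentedGroup.closure_range_of,
    Subgroup.closure_le]
  rintro _ ⟨i, rfl⟩
  exact ⟨_, coprodToH_of_ofAdd_one i⟩

noncomputable def factorRep (u : ℂˣ) (i : Fin 2) : cyclicFactor i →* PGL2 :=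
  ((rho u).comp coprodToH).comp Monoid.CoprodI.of

theorem factorRep_ofAdd_one (u : ℂˣ) (i : Fin 2) :
    factorRep u i (.ofAdd 1) =
      QuotientGroup.mk ((![sMat u, tMat] i : SL(2, ℂ)) : GL (Fin 2) ℂ) := by
  rw [factorRep, MonoidHom.comp_apply, MonoidHom.comp_apply, coprodToH_of_ofAdd_one,
    PresentedGroup.of, rho_mk]
  fin_cases i <;> simp [projWordRep, wordRep]

theorem factorRep_pingPong {u : ℂˣ} (hu : 2 ≤ ‖(u : ℂ)‖) :
    Pairwise fun i j => ∀ h : cyclicFactor i, h ≠ 1 →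
      factorRep u i h • ![unitDisc, unitDiscᶜ] j ⊆ ![unitDisc, unitDiscᶜ] i := by
  intro i j hij h hh
  match i, j, hij with
  | 0, 0, hij => exact absurd rfl hij
  | 0, 1, _ =>
    rintro _ ⟨x, hx, rfl⟩
    have hcases : ∀ h : cyclicFactor 0, h ≠ 1 → h = .ofAdd 1 ∨ h = .ofAdd 1 ^ 2 := by decide
    obtain rfl | rfl := hcases h hh
    · rw [factorRep_ofAdd_one]
      exact sMat_smul_mem_unitDisc hu hx
    · rw [map_pow, factorRep_ofAdd_one, ← QuotientGroup.mk_pow, ← map_pow]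
      exact sMat_sq_smul_mem_unitDisc hu hx
  | 1, 0, _ =>
    rintro _ ⟨x, hx, rfl⟩
    have hcases : ∀ h : cyclicFactor 1, h ≠ 1 → h = .ofAdd 1 := by decide
    obtain rfl := hcases h hh
    rw [factorRep_ofAdd_one]
    exact tMat_smul_notMem_unitDisc hx
  | 1, 1, hij => exact absurd rfl hij

theorem rho_injective {u : ℂˣ} (hu : 2 ≤ ‖(u : ℂ)‖) : Function.Injective (rho u) := by
  have hcard : 3 ≤ Cardinal.mk (cyclicFactor 0) := by
    rw [Cardinal.mk_fintype, Nat.ofNat_le_cast]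
    decide
  refine Function.Injective.of_comp_right (g := coprodToH) ?_ coprodToH_surjective
  rw [← MonoidHom.coe_comp, ← Monoid.CoprodI.lift_comp_of' ((rho u).comp coprodToH)]
  refine Monoid.CoprodI.lift_injective_of_ping_pong (factorRep u) (.inr ⟨0, hcard⟩)
    ![unitDisc, unitDiscᶜ] (fun i => ?_) (fun i j hij => ?_) (factorRep_pingPong hu)
  · fin_cases i
    · exact ⟨Projectivization.mk ℂ ![0, 1] (by simp), (mk_mem_unitDisc_iff _).2 (by simp)⟩
    · exact ⟨Projectivization.mk ℂ ![1, 0] (by simp), (mk_mem_unitDisc_iff _).not.2 (by simp)⟩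
  · fin_cases i <;> fin_cases j
    · exact absurd rfl hij
    · exact disjoint_compl_right
    · exact disjoint_compl_left
    · exact absurd rfl hij

theorem stmt14 (g : Hgrp) (hg : g ≠ 1) :
    {A : ℂ | ∃ (hA : A ≠ 0) (ρ : Hgrp →* PGL2),
      ρ hs = (QuotientGroup.mk (MsA A hA) : PGL2) ∧
      ρ ht = (QuotientGroup.mk Mt0 : PGL2) ∧
      ρ g = 1}.Countable := by
  obtain ⟨w, rfl⟩ := PresentedGroup.mk_surjective hRels g
  have hW : genericWordMatrix ℂ w ∉ Set.range (Matrix.scalar (Fin 2)) := by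
    rintro ⟨c, hc⟩
    refine hg (rho_injective (u := Units.mk0 2 two_ne_zero) (by simp) ?_)
    rw [map_one, rho_mk_eq_one_iff, ← hc]
    exact ⟨eval₂ (RingHom.id ℂ) (Units.mk0 2 two_ne_zero) c, by simp [Matrix.diagonal_map]⟩
  refine ((finite_setOf_map_eval₂_mem_range_scalar hW).image Units.val).countable.mono ?_
  rintro A ⟨hA, ρ, hρs, hρt, hρg⟩
  refine ⟨Units.mk0 A hA, ?_, rfl⟩
  rw [rho_unique (Units.mk0 A hA) hρs hρt] at hρg
  exact (rho_mk_eq_one_iff _ _).1 hρg
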